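/- arXiv:1506.08881 — 2 statements merged into one kernel-verified Lean document; each statement's English description precedes it below -/
import Mathlib

section
/- The map sending a word W ∈ Θ^k_n to the pair (W', S), where W' is obtained from W by replacing each of the k letters F by oC and S ⊆ {1,…,2n} is the set of positions of those F's, is an injection from Θ^k_n into Θ^0_n × {k-element subsets of {1,…,2n}}. Moreover, its image consists exactly of the pairs (W', {i_1,…,i_k}) such that for each j, the letter of W' at position i_j is oC and the cheeseburger it removes is the topmost burger on the stack just before step i_j. -/
/-!
An F and an oC act identically on a stack whose top is a cheeseburger: both pop it. So if at
every position where two words differ by F versus oC the top of the stack is a cheeseburger,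
the two words run through the same sequence of stacks. Hence replacing the F's of a word of
Θ^k_n by oC's, or conversely turning marked oC's that pop the top of the stack into F's,
preserves perfection and the tops of the stacks; and the pair (W', S) determines W.
-/

open scoped Classical

inductive Burger : Type
  | ham | cheese
  deriving DecidableEq

instance : Fintype Burger :=
  ⟨{Burger.ham, Burger.cheese}, by intro x; cases x <;> simp⟩

inductive Letter : Type
  | bH | bC | oH | oC | fresh
  deriving DecidableEq

instance : Fintype Letter :=
  ⟨{Letter.bH, Letter.bC, Letter.oH, Letter.oC, Letter.fresh}, by intro x; cases x <;> simp⟩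

/-- Remove the topmost burger of type `b` from the stack (the head of the list
is the top of the stack); `none` if there is no such burger. -/
def removeTopmost (b : Burger) : List Burger → Option (List Burger)
  | [] => none
  | c :: st => if c = b then some st else (removeTopmost b st).map (c :: ·)

/-- Process a single letter: productions push onto the stack, orders remove the
topmost burger of their type, and a fresh order F removes the topmost burger
regardless of type.  `none` indicates an unfulfillable order. -/
def step (st : List Burger) : Letter → Option (List Burger)
  | .bH => some (.ham :: st)
  | .bC => some (.cheese :: st)
  | .oH => removeTopmost .ham st
  | .oC => removeTopmost .cheese st
  | .fresh => st.tail?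

/-- The burger stack after processing the first `i` letters of `w`;
`none` if some order could not be fulfilled. -/
def stackAt (w : List Letter) (i : ℕ) : Option (List Burger) :=
  (w.take i).foldlM step []

/-- The top burger on the stack just before processing the letter at
(0-based) position `i` of `w`. -/
def topAt (w : List Letter) (i : ℕ) : Option Burger :=
  (stackAt w i).bind List.head?

/-- A word is perfect if every order is fulfilled and the stack ends empty. -/
def IsPerfect (w : List Letter) : Prop := stackAt w w.length = some []

/-- Membership in Θ^k_n: perfect word of length `2n` with exactly `k` letters F,
each of which removes a cheeseburger (i.e. the top of the stack just before each
F is a cheeseburger). -/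
def InTheta (k n : ℕ) (w : List Letter) : Prop :=
  w.length = 2 * n ∧ IsPerfect w ∧ w.count Letter.fresh = k ∧
    ∀ i < w.length, w[i]? = some Letter.fresh → topAt w i = some Burger.cheese

/-- Θ^k_n, encoded as a finite set of words of length `2n`. -/
noncomputable def Theta (k n : ℕ) : Finset (Fin (2 * n) → Letter) :=
  Finset.univ.filter fun w => InTheta k n (List.ofFn w)


/-- Replace every F in the word by an oC. -/
def replaceF {N : ℕ} (w : Fin N → Letter) : Fin N → Letter :=
  fun i => if w i = Letter.fresh then Letter.oC else w i

/-- The set of positions of the letters F. -/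
noncomputable def freshPositions {N : ℕ} (w : Fin N → Letter) : Finset (Fin N) :=
  Finset.univ.filter fun i => w i = Letter.fresh

theorem stackAt_succ {w : List Letter} {i : ℕ} (hi : i < w.length) :
    stackAt w (i + 1) = (stackAt w i).bind (step · w[i]) := by
  rw [stackAt, stackAt, List.take_add_one, List.getElem?_eq_getElem hi, List.foldlM_append]
  simp

theorem stackAt_succ_of_length_le {w : List Letter} {i : ℕ} (hi : w.length ≤ i) :
    stackAt w (i + 1) = stackAt w i := by
  rw [stackAt, stackAt, List.take_of_length_le hi, List.take_of_length_le (by omega)]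

theorem stackAt_eq_of_step_eq {w₁ w₂ : List Letter} (hlen : w₁.length = w₂.length)
    (hstep : ∀ i (hi : i < w₁.length) st, stackAt w₁ i = some st →
      step st w₁[i] = step st (w₂[i]'(hlen ▸ hi))) :
    stackAt w₁ = stackAt w₂ := by
  funext i
  induction i with
  | zero => rfl
  | succ i ih =>
    by_cases hi : i < w₁.length
    · rw [stackAt_succ hi, stackAt_succ (hlen ▸ hi), ← ih]
      cases hst : stackAt w₁ i with
      | none => rfl
      | some st => exact hstep i hi st hst
    · rw [stackAt_succ_of_length_le (not_lt.1 hi),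
        stackAt_succ_of_length_le (hlen ▸ not_lt.1 hi), ih]

theorem step_fresh_eq_step_oC {st : List Burger} (h : st.head? = some .cheese) :
    step st .fresh = step st .oC := by
  obtain ⟨rest, rfl⟩ : ∃ rest, st = .cheese :: rest := by
    cases st with
    | nil => simp at h
    | cons b rest => simp_all
  simp [step, removeTopmost]

theorem head?_eq_of_topAt_eq {w : List Letter} {i : ℕ} {st : List Burger} {b : Burger}
    (htop : topAt w i = some b) (hst : stackAt w i = some st) : st.head? = some b := by
  simpa [topAt, hst] using htop

theorem count_ofFn {α : Type*} [DecidableEq α] {N : ℕ} (w : Fin N → α) (a : α) :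
    (List.ofFn w).count a = (Finset.univ.filter fun i => w i = a).card := by
  rw [← Multiset.coe_count, ← Fin.univ_val_map, Multiset.count_map]
  simp [Finset.card, Finset.filter_val, eq_comm]

theorem mem_Theta_iff {k n : ℕ} {w : Fin (2 * n) → Letter} :
    w ∈ Theta k n ↔ IsPerfect (List.ofFn w) ∧ (freshPositions w).card = k ∧
      ∀ i, w i = .fresh → topAt (List.ofFn w) i = some .cheese := by
  simp [Theta, InTheta, freshPositions, count_ofFn, Fin.forall_iff]

theorem mem_Theta_zero_iff {n : ℕ} {w : Fin (2 * n) → Letter} :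
    w ∈ Theta 0 n ↔ IsPerfect (List.ofFn w) ∧ ∀ i, w i ≠ .fresh := by
  simp +contextual [mem_Theta_iff, freshPositions, Finset.filter_eq_empty_iff]

theorem isPerfect_ofFn_congr {N : ℕ} {w₁ w₂ : Fin N → Letter}
    (h : stackAt (List.ofFn w₁) = stackAt (List.ofFn w₂)) :
    IsPerfect (List.ofFn w₁) ↔ IsPerfect (List.ofFn w₂) := by
  simp only [IsPerfect, List.length_ofFn, h]

theorem replaceF_ne_fresh {N : ℕ} (w : Fin N → Letter) (i : Fin N) :
    replaceF w i ≠ .fresh := by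
  unfold replaceF
  split_ifs <;> simp_all

theorem freshPositions_replaceF_injective {N : ℕ} :
    Function.Injective fun w : Fin N → Letter => (replaceF w, freshPositions w) := by
  intro w₁ w₂ h
  simp only [Prod.mk.injEq, funext_iff, Finset.ext_iff, freshPositions, Finset.mem_filter,
    Finset.mem_univ, true_and, replaceF] at h
  funext i
  have := h.1 i
  by_cases h₁ : w₁ i = .fresh <;> simp_all

theorem stackAt_replaceF {N : ℕ} {w : Fin N → Letter}
    (htop : ∀ i, w i = .fresh → topAt (List.ofFn w) i = some .cheese) :
    stackAt (List.ofFn (replaceF w)) = stackAt (List.ofFn w) := by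
  refine (stackAt_eq_of_step_eq (by simp) fun i hi st hst => ?_).symm
  simp only [List.getElem_ofFn, replaceF]
  split_ifs with hf
  · rw [hf]
    exact step_fresh_eq_step_oC (head?_eq_of_topAt_eq (htop _ hf) hst)
  · rfl

def restoreF {N : ℕ} (v : Fin N → Letter) (S : Finset (Fin N)) : Fin N → Letter :=
  fun i => if i ∈ S then .fresh else v i

theorem replaceF_restoreF {N : ℕ} {v : Fin N → Letter} {S : Finset (Fin N)}
    (hv : ∀ i, v i ≠ .fresh) (hS : ∀ i ∈ S, v i = .oC) : replaceF (restoreF v S) = v := by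
  funext i
  by_cases h : i ∈ S <;> simp [replaceF, restoreF, h, hS, hv]

theorem freshPositions_restoreF {N : ℕ} {v : Fin N → Letter} (S : Finset (Fin N))
    (hv : ∀ i, v i ≠ .fresh) : freshPositions (restoreF v S) = S := by
  ext i
  by_cases h : i ∈ S <;> simp [freshPositions, restoreF, h, hv]

theorem stackAt_restoreF {N : ℕ} {v : Fin N → Letter} {S : Finset (Fin N)}
    (hS : ∀ i ∈ S, v i = .oC ∧ topAt (List.ofFn v) i = some .cheese) :
    stackAt (List.ofFn (restoreF v S)) = stackAt (List.ofFn v) := by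
  refine (stackAt_eq_of_step_eq (by simp) fun i hi st hst => ?_).symm
  simp only [List.getElem_ofFn, restoreF]
  split_ifs with hiS
  · rw [(hS _ hiS).1]
    exact (step_fresh_eq_step_oC (head?_eq_of_topAt_eq (hS _ hiS).2 hst)).symm
  · rfl

theorem replaceF_injection_and_image (n k : ℕ) :
    Set.InjOn (fun w => (replaceF w, freshPositions w))
      (Theta k n : Set (Fin (2 * n) → Letter)) ∧
    (fun w => (replaceF w, freshPositions w)) ''
        (Theta k n : Set (Fin (2 * n) → Letter)) =
      {p : (Fin (2 * n) → Letter) × Finset (Fin (2 * n)) |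
        p.1 ∈ Theta 0 n ∧ p.2.card = k ∧
        ∀ i ∈ p.2, p.1 i = Letter.oC ∧
          topAt (List.ofFn p.1) (i : ℕ) = some Burger.cheese} := by
  refine ⟨freshPositions_replaceF_injective.injOn, ?_⟩
  ext ⟨v, S⟩
  simp only [Set.mem_image, Finset.mem_coe, Set.mem_ofPred_eq, Prod.mk.injEq]
  constructor
  · rintro ⟨w, hw, rfl, rfl⟩
    obtain ⟨hperf, hcard, htop⟩ := mem_Theta_iff.1 hw
    have hstack := stackAt_replaceF htop
    refine ⟨mem_Theta_zero_iff.2 ⟨(isPerfect_ofFn_congr hstack).2 hperf, replaceF_ne_fresh w⟩,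
      hcard, fun i hi => ?_⟩
    have hfresh : w i = .fresh := by simpa [freshPositions] using hi
    simp [replaceF, hfresh, topAt, hstack, ← htop i hfresh]
  · rintro ⟨hv, hcard, hS⟩
    obtain ⟨hperf, hv⟩ := mem_Theta_zero_iff.1 hv
    have hstack := stackAt_restoreF hS
    refine ⟨restoreF v S, mem_Theta_iff.2 ⟨(isPerfect_ofFn_congr hstack).2 hperf, ?_, ?_⟩,
      replaceF_restoreF hv fun i hi => (hS i hi).1, freshPositions_restoreF S hv⟩
    · rw [freshPositions_restoreF S hv, hcard]
    · intro i hi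
      have hiS : i ∈ S := by by_contra h; simp [restoreF, h, hv] at hi
      simp only [topAt, hstack]
      exact (hS i hiS).2
end

section
/- For all nonnegative integers n and 0 ≤ j ≤ n, the identity C(2n, 2j) · Cat_j · Cat_{n−j} = C(n+1, j) · C(n+1, j+1) · (2n)! / ((n+1)! · (n+1)!) holds, where Cat_m = C(2m, m)/(m+1) is the m-th Catalan number. -/
/-!
STATEMENT 3: for all `n ≥ 0` and `0 ≤ j ≤ n`,
`C(2n, 2j) · Cat_j · Cat_{n−j} = C(n+1, j) · C(n+1, j+1) · (2n)! / ((n+1)!·(n+1)!)`,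
where `Cat_m` is the m-th Catalan number.  (Stated in ℚ since the last factor
need not be an integer by itself.)
-/

lemma catalan_cast_eq (m : ℕ) :
    (catalan m : ℚ) = ((2 * m).choose m : ℚ) / (m + 1) := by
  rw [eq_div_iff (by positivity)]
  have := succ_mul_catalan_eq_centralBinom m
  have h2 : ((m + 1) * catalan m : ℕ) = ((2 * m).choose m : ℕ) := this
  push_cast [← h2]
  ring

theorem choose_catalan_identity (n j : ℕ) (hj : j ≤ n) :
    (((2 * n).choose (2 * j) : ℚ) * catalan j * catalan (n - j))
      = ((n + 1).choose j : ℚ) * ((n + 1).choose (j + 1) : ℚ)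
          * ((2 * n).factorial : ℚ)
          / (((n + 1).factorial : ℚ) * ((n + 1).factorial : ℚ)) := by
  have h1 : 2 * n - 2 * j = 2 * (n - j) := by omega
  rw [catalan_cast_eq, catalan_cast_eq]
  rw [Nat.cast_choose ℚ (by omega : 2 * j ≤ 2 * n),
      Nat.cast_choose ℚ (by omega : j ≤ 2 * j),
      Nat.cast_choose ℚ (by omega : n - j ≤ 2 * (n - j)),
      Nat.cast_choose ℚ (by omega : j ≤ n + 1),
      Nat.cast_choose ℚ (by omega : j + 1 ≤ n + 1)]
  rw [h1]
  have e1 : 2 * j - j = j := by omega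
  have e2 : 2 * (n - j) - (n - j) = n - j := by omega
  have e3 : n + 1 - j = (n - j) + 1 := by omega
  have e4 : n + 1 - (j + 1) = n - j := by omega
  rw [e1, e2, e3, e4]
  rw [Nat.factorial_succ (n - j), Nat.factorial_succ j]
  have hnj : ((n - j : ℕ) : ℚ) = (n : ℚ) - j := by
    push_cast [Nat.cast_sub hj]; ring
  push_cast [hnj]
  have f1 : ((2 * j).factorial : ℚ) ≠ 0 := by positivity
  have f2 : ((2 * (n - j)).factorial : ℚ) ≠ 0 := by positivity
  have f3 : (j.factorial : ℚ) ≠ 0 := by positivity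
  have f4 : ((n - j).factorial : ℚ) ≠ 0 := by positivity
  have f5 : ((n + 1).factorial : ℚ) ≠ 0 := by positivity
  have f6 : (j : ℚ) + 1 ≠ 0 := by positivity
  have f7 : (n : ℚ) - j + 1 ≠ 0 := by
    have : (0:ℚ) ≤ (n:ℚ) - j := by
      rw [← hnj]; positivity
    linarith
  field_simp
end
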